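/- For any n×n real matrix A, γ₂(A) ≥ (1/n)·‖A‖_tr, where ‖A‖_tr is the trace norm (sum of singular values) of A. -/

import Mathlib

/-!
If `e i` are orthonormal eigenvectors of `Aᵀ A` with eigenvalues `σ i ^ 2`, the nonzero ones give
orthonormal pairs `v i = e i`, `w i = A e i / σ i` with `‖A‖_tr = ∑ ⟪w i, A v i⟫`. For a
factorization `A = U V` each term is `⟪Uᵀ w i, V v i⟫`, so Cauchy–Schwarz followed by Bessel's
inequality for the columns of `U` and the rows of `V` gives `‖A‖_tr ≤ ‖U‖_F ‖V‖_F`. Finally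
`‖U‖_F ≤ √n · rowMax U` and `‖V‖_F ≤ √n · colMax V`.
-/

open scoped BigOperators

noncomputable def rowMax {α : Type*} [Fintype α] {r : ℕ} (U : Matrix α (Fin r) ℝ) : ℝ :=
  ⨆ i, Real.sqrt (∑ j, (U i j) ^ 2)

noncomputable def colMax {β : Type*} [Fintype β] {r : ℕ} (V : Matrix (Fin r) β ℝ) : ℝ :=
  ⨆ j, Real.sqrt (∑ i, (V i j) ^ 2)

/-- The γ₂ factorization norm of a real matrix. -/
noncomputable def gamma2 {α β : Type*} [Fintype α] [Fintype β] (A : Matrix α β ℝ) : ℝ :=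
  sInf {t : ℝ | ∃ (r : ℕ) (U : Matrix α (Fin r) ℝ) (V : Matrix (Fin r) β ℝ),
    A = U * V ∧ t = rowMax U * colMax V}

/-- The trace norm (sum of singular values) of a square real matrix, defined as the trace
of the positive semidefinite square root of `Aᵀ * A`. -/
noncomputable def traceNorm {n : ℕ} (A : Matrix (Fin n) (Fin n) ℝ) : ℝ :=
  ((Matrix.isHermitian_conjTranspose_mul_self A).eigenvectorUnitary.1 *
    Matrix.diagonal (fun i => Real.sqrt ((Matrix.isHermitian_conjTranspose_mul_self A).eigenvalues i)) *
    (star (Matrix.isHermitian_conjTranspose_mul_self A).eigenvectorUnitary : Matrix (Fin n) (Fin n) ℝ)).trace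

open Matrix

section FactorizationNorms

variable {α β : Type*} [Fintype α] [Fintype β] {r : ℕ}

theorem rowMax_nonneg (U : Matrix α (Fin r) ℝ) : 0 ≤ rowMax U :=
  Real.iSup_nonneg fun _ => Real.sqrt_nonneg _

theorem colMax_nonneg (V : Matrix (Fin r) β ℝ) : 0 ≤ colMax V :=
  Real.iSup_nonneg fun _ => Real.sqrt_nonneg _

theorem sum_sq_le_rowMax_sq (U : Matrix α (Fin r) ℝ) (i : α) : ∑ j, U i j ^ 2 ≤ rowMax U ^ 2 :=
  (Real.sqrt_le_iff.mp
    (le_ciSup (f := fun i => √(∑ j, U i j ^ 2)) (Set.finite_range _).bddAbove i)).2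

theorem sum_sq_le_colMax_sq (V : Matrix (Fin r) β ℝ) (j : β) : ∑ i, V i j ^ 2 ≤ colMax V ^ 2 :=
  (Real.sqrt_le_iff.mp
    (le_ciSup (f := fun j => √(∑ i, V i j ^ 2)) (Set.finite_range _).bddAbove j)).2

theorem sum_sum_sq_le_card_mul_rowMax_sq (U : Matrix α (Fin r) ℝ) :
    ∑ i, ∑ j, U i j ^ 2 ≤ Fintype.card α * rowMax U ^ 2 := by
  refine (Finset.sum_le_sum fun i _ => sum_sq_le_rowMax_sq U i).trans_eq ?_
  rw [Finset.sum_const, Finset.card_univ, nsmul_eq_mul]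

theorem sum_sum_sq_le_card_mul_colMax_sq (V : Matrix (Fin r) β ℝ) :
    ∑ i, ∑ j, V i j ^ 2 ≤ Fintype.card β * colMax V ^ 2 := by
  rw [Finset.sum_comm]
  refine (Finset.sum_le_sum fun j _ => sum_sq_le_colMax_sq V j).trans_eq ?_
  rw [Finset.sum_const, Finset.card_univ, nsmul_eq_mul]

end FactorizationNorms

theorem Orthonormal.sum_dotProduct_sq_le {ι m : Type*} [Fintype ι] [Fintype m]
    {w : ι → EuclideanSpace ℝ m} (hw : Orthonormal ℝ w) (x : m → ℝ) :
    ∑ i, (⇑(w i) ⬝ᵥ x) ^ 2 ≤ ∑ k, x k ^ 2 := by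
  simpa [← EuclideanSpace.real_norm_sq_eq, EuclideanSpace.inner_eq_star_dotProduct,
    dotProduct_comm] using hw.sum_inner_products_le (WithLp.toLp 2 x) (s := Finset.univ)

theorem sq_sum_dotProduct_mul_mulVec_le {ι m n κ : Type*} [Fintype ι] [Fintype m] [Fintype n]
    [Fintype κ] (U : Matrix m κ ℝ) (V : Matrix κ n ℝ) {w : ι → EuclideanSpace ℝ m}
    {v : ι → EuclideanSpace ℝ n} (hw : Orthonormal ℝ w) (hv : Orthonormal ℝ v) :
    (∑ i, ⇑(w i) ⬝ᵥ (U * V) *ᵥ ⇑(v i)) ^ 2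
      ≤ (∑ k, ∑ j, U k j ^ 2) * ∑ k, ∑ j, V k j ^ 2 := by
  have hU : ∑ i, ∑ k, (⇑(w i) ᵥ* U) k ^ 2 ≤ ∑ k, ∑ j, U k j ^ 2 := by
    calc ∑ i, ∑ k, (⇑(w i) ᵥ* U) k ^ 2 = ∑ k, ∑ i, (⇑(w i) ⬝ᵥ fun j => U j k) ^ 2 :=
          Finset.sum_comm
      _ ≤ ∑ k, ∑ j, U j k ^ 2 := Finset.sum_le_sum fun k _ => hw.sum_dotProduct_sq_le _
      _ = ∑ k, ∑ j, U k j ^ 2 := Finset.sum_comm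
  have hV : ∑ i, ∑ k, (V *ᵥ ⇑(v i)) k ^ 2 ≤ ∑ k, ∑ j, V k j ^ 2 := by
    rw [Finset.sum_comm]
    refine Finset.sum_le_sum fun k _ => ?_
    simpa [mulVec, dotProduct_comm] using hv.sum_dotProduct_sq_le (V k)
  calc (∑ i, ⇑(w i) ⬝ᵥ (U * V) *ᵥ ⇑(v i)) ^ 2
      = (∑ p : ι × κ, (⇑(w p.1) ᵥ* U) p.2 * (V *ᵥ ⇑(v p.1)) p.2) ^ 2 := by
        rw [Fintype.sum_prod_type]
        congr 1
        refine Finset.sum_congr rfl fun i _ => ?_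
        rw [← mulVec_mulVec, dotProduct_mulVec]
        rfl
    _ ≤ (∑ p : ι × κ, (⇑(w p.1) ᵥ* U) p.2 ^ 2) * ∑ p : ι × κ, (V *ᵥ ⇑(v p.1)) p.2 ^ 2 :=
        Finset.sum_mul_sq_le_sq_mul_sq _ _ _
    _ ≤ (∑ k, ∑ j, U k j ^ 2) * ∑ k, ∑ j, V k j ^ 2 := by
        rw [Fintype.sum_prod_type, Fintype.sum_prod_type]
        exact mul_le_mul hU hV (by positivity) (by positivity)

theorem traceNorm_eq_sum_sqrt_eigenvalues {n : ℕ} (A : Matrix (Fin n) (Fin n) ℝ) :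
    traceNorm A = ∑ i, √((isHermitian_conjTranspose_mul_self A).eigenvalues i) := by
  rw [traceNorm, trace_mul_cycle, Unitary.coe_star_mul_self, one_mul, trace_diagonal]

theorem exists_orthonormal_traceNorm_eq_sum {n : ℕ} (A : Matrix (Fin n) (Fin n) ℝ) :
    ∃ (s : Finset (Fin n)) (w v : s → EuclideanSpace ℝ (Fin n)), Orthonormal ℝ w ∧
      Orthonormal ℝ v ∧ traceNorm A = ∑ i, ⇑(w i) ⬝ᵥ A *ᵥ ⇑(v i) := by
  set hH := isHermitian_conjTranspose_mul_self A
  set e := hH.eigenvectorBasis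
  set σ : Fin n → ℝ := fun i => √(hH.eigenvalues i)
  have hσ : ∀ i, σ i ^ 2 = hH.eigenvalues i :=
    fun i => Real.sq_sqrt (eigenvalues_conjTranspose_mul_self_nonneg A i)
  have hAe : ∀ i j, A *ᵥ ⇑(e i) ⬝ᵥ A *ᵥ ⇑(e j) = if i = j then σ i ^ 2 else 0 := by
    intro i j
    have he : ⇑(e i) ⬝ᵥ ⇑(e j) = if i = j then 1 else 0 := by
      simpa [EuclideanSpace.inner_eq_star_dotProduct, dotProduct_comm] using
        orthonormal_iff_ite.mp e.orthonormal i j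
    rw [← vecMul_transpose, ← dotProduct_mulVec, mulVec_mulVec,
      ← conjTranspose_eq_transpose_of_trivial, hH.mulVec_eigenvectorBasis, dotProduct_smul, he]
    split_ifs with h <;> simp [h, hσ]
  set s := Finset.univ.filter fun i => σ i ≠ 0
  refine ⟨s, fun i => WithLp.toLp 2 ((σ i)⁻¹ • A *ᵥ ⇑(e i)), fun i => e i, ?_,
    e.orthonormal.comp _ Subtype.val_injective, ?_⟩
  · rw [orthonormal_iff_ite]
    intro i j
    have hi : σ i ≠ 0 := (Finset.mem_filter.mp i.2).2
    rw [EuclideanSpace.inner_toLp_toLp, star_trivial, smul_dotProduct, dotProduct_smul, hAe]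
    by_cases hij : i = j
    · subst hij
      simp only [↓reduceIte, smul_eq_mul]
      field_simp
    · have hji : (j : Fin n) ≠ i := fun h => hij (Subtype.ext h.symm)
      simp [hij, hji]
  · have hσe : ∀ i, σ i = (σ i)⁻¹ • A *ᵥ ⇑(e i) ⬝ᵥ A *ᵥ ⇑(e i) := by
      intro i
      rw [smul_dotProduct, hAe, if_pos rfl, smul_eq_mul]
      by_cases hi : σ i = 0
      · simp [hi]
      · field_simp
    rw [traceNorm_eq_sum_sqrt_eigenvalues, ← Finset.sum_filter_ne_zero, ← Finset.sum_coe_sort]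
    exact Finset.sum_congr rfl fun i _ => hσe i

theorem traceNorm_mul_le {n r : ℕ} (U : Matrix (Fin n) (Fin r) ℝ) (V : Matrix (Fin r) (Fin n) ℝ) :
    traceNorm (U * V) ≤ n * (rowMax U * colMax V) := by
  obtain ⟨s, w, v, hw, hv, htr⟩ := exists_orthonormal_traceNorm_eq_sum (U * V)
  have hU := sum_sum_sq_le_card_mul_rowMax_sq U
  have hV := sum_sum_sq_le_card_mul_colMax_sq V
  rw [Fintype.card_fin] at hU hV
  refine le_of_pow_le_pow_left₀ two_ne_zero
    (mul_nonneg n.cast_nonneg (mul_nonneg (rowMax_nonneg U) (colMax_nonneg V))) ?_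
  calc traceNorm (U * V) ^ 2 ≤ (∑ k, ∑ j, U k j ^ 2) * ∑ k, ∑ j, V k j ^ 2 :=
        htr ▸ sq_sum_dotProduct_mul_mulVec_le U V hw hv
    _ ≤ (n * rowMax U ^ 2) * (n * colMax V ^ 2) :=
        mul_le_mul hU hV (by positivity) (by positivity)
    _ = (n * (rowMax U * colMax V)) ^ 2 := by ring

/-- For any `n × n` real matrix `A`, `γ₂(A) ≥ (1/n) ‖A‖_tr`. -/
theorem gamma2_ge_traceNorm_div {n : ℕ} (A : Matrix (Fin n) (Fin n) ℝ) :
    gamma2 A ≥ traceNorm A / n := by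
  refine le_csInf ⟨_, n, A, 1, (mul_one A).symm, rfl⟩ ?_
  rintro _ ⟨r, U, V, rfl, rfl⟩
  exact div_le_of_le_mul₀ n.cast_nonneg (mul_nonneg (rowMax_nonneg U) (colMax_nonneg V))
    ((traceNorm_mul_le U V).trans_eq (mul_comm _ _))
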